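/- Let L₆ be the 3-dimensional complex algebra with basis e₁, e₂, e₃ and nonzero products e₁e₃ = e₂, e₂e₃ = e₁. A linear map g : L₆ → L₆ is an algebra automorphism if and only if its matrix with respect to (e₁,e₂,e₃) has the form with rows (α₁, α₄, 0), (α₄, α₁, 0), (0, 0, 1) with α₁² ≠ α₄², or rows (α₁, −α₄, 0), (α₄, −α₁, 0), (0, 0, −1) with α₁² ≠ α₄², for some α₁, α₄ ∈ ℂ. -/
import Mathlib


/-- Multiplication of the algebra `L₆` on `ℂ³` (standard basis `e₁, e₂, e₃`),
with nonzero products `e₁e₃ = e₂`, `e₂e₃ = e₁`. -/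
def mulL6 (a b : Fin 3 → ℂ) : Fin 3 → ℂ :=
  ![a 1 * b 2, a 0 * b 2, 0]

lemma bij_iff_isUnit (g : (Fin 3 → ℂ) →ₗ[ℂ] (Fin 3 → ℂ)) :
    Function.Bijective g ↔ IsUnit (LinearMap.toMatrix' g) := by
  rw [← Module.End.isUnit_iff]
  have e : ∀ f : (Fin 3 → ℂ) →ₗ[ℂ] (Fin 3 → ℂ),
      LinearMap.toMatrixAlgEquiv' f = LinearMap.toMatrix' f := fun _ => rfl
  constructor
  · intro h
    rw [← e]
    exact h.map (LinearMap.toMatrixAlgEquiv' : ((Fin 3 → ℂ) →ₗ[ℂ] (Fin 3 → ℂ)) ≃ₐ[ℂ] _)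
  · intro h
    rw [← e] at h
    have := h.map (LinearMap.toMatrixAlgEquiv'.symm : Matrix (Fin 3) (Fin 3) ℂ ≃ₐ[ℂ] _)
    simpa using this

/-- A linear map `g : L₆ → L₆` is an algebra automorphism iff its matrix with
respect to `(e₁,e₂,e₃)` has rows `(α₁,α₄,0), (α₄,α₁,0), (0,0,1)` with `α₁² ≠ α₄²`,
or rows `(α₁,−α₄,0), (α₄,−α₁,0), (0,0,−1)` with `α₁² ≠ α₄²`. -/
theorem L6_automorphisms (g : (Fin 3 → ℂ) →ₗ[ℂ] (Fin 3 → ℂ)) :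
    (Function.Bijective g ∧ ∀ x y : Fin 3 → ℂ, g (mulL6 x y) = mulL6 (g x) (g y)) ↔
    ∃ α₁ α₄ : ℂ, α₁ ^ 2 ≠ α₄ ^ 2 ∧
      (LinearMap.toMatrix' g = !![α₁, α₄, 0; α₄, α₁, 0; 0, 0, 1] ∨
       LinearMap.toMatrix' g = !![α₁, -α₄, 0; α₄, -α₁, 0; 0, 0, -1]) := by
  have hg : ∀ x, g x = (LinearMap.toMatrix' g).mulVec x := by
    intro x
    conv_lhs => rw [← Matrix.toLin'_toMatrix' g]
    rw [Matrix.toLin'_apply]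
  constructor
  · rintro ⟨hbij, hmul⟩
    set M := LinearMap.toMatrix' g with hM
    have key : ∀ x y : Fin 3 → ℂ, ∀ i : Fin 3,
        (M.mulVec (mulL6 x y)) i = mulL6 (M.mulVec x) (M.mulVec y) i := by
      intro x y i
      have := hmul x y
      rw [hg, hg, hg] at this
      exact congrFun this i
    have h10 := key ![1,0,0] ![0,0,1] 0
    have h11 := key ![1,0,0] ![0,0,1] 1
    have h12 := key ![1,0,0] ![0,0,1] 2
    have h20 := key ![0,1,0] ![0,0,1] 0
    have h21 := key ![0,1,0] ![0,0,1] 1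
    have h22 := key ![0,1,0] ![0,0,1] 2
    have h30 := key ![0,0,1] ![0,0,1] 0
    have h31 := key ![0,0,1] ![0,0,1] 1
    simp [mulL6, Matrix.mulVec, dotProduct, Fin.sum_univ_three] at h10 h11 h12 h20 h21 h22 h30 h31
    have hker : ∀ x : Fin 3 → ℂ, M.mulVec x = 0 → x = 0 := by
      intro x hx
      apply hbij.1
      rw [hg x, hx, map_zero]
    have hone : (1 : ℂ) ≠ 0 := one_ne_zero
    -- r ≠ 0
    have hr0 : M 2 2 ≠ 0 := by
      intro hr
      have hx : M.mulVec ![1,0,0] = 0 := by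
        funext i
        fin_cases i <;>
          simp [Matrix.mulVec, dotProduct, Fin.sum_univ_three, h20, h21, h22, hr]
      have := congrFun (hker _ hx) 0
      simp at this
    have hc0 : M 0 2 = 0 := h31.resolve_right hr0
    have hf0 : M 1 2 = 0 := h30.resolve_right hr0
    -- r^2 = 1
    have ha : M 0 0 * (M 2 2 ^ 2 - 1) = 0 := by
      have := h20
      rw [h11] at this
      linear_combination -this
    have hb : M 0 1 * (M 2 2 ^ 2 - 1) = 0 := by
      have := h10
      rw [h21] at this
      linear_combination -this
    have hr2 : M 2 2 ^ 2 = 1 := by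
      by_contra hne
      have hsub : M 2 2 ^ 2 - 1 ≠ 0 := sub_ne_zero.mpr hne
      have ha0 : M 0 0 = 0 := by
        rcases mul_eq_zero.mp ha with h | h
        · exact h
        · exact absurd h hsub
      have hb0 : M 0 1 = 0 := by
        rcases mul_eq_zero.mp hb with h | h
        · exact h
        · exact absurd h hsub
      have hx : M.mulVec ![1,0,0] = 0 := by
        funext i
        fin_cases i <;>
          simp [Matrix.mulVec, dotProduct, Fin.sum_univ_three, ha0, h21, hb0, h22]
      have := congrFun (hker _ hx) 0
      simp at this
    have hcases : M 2 2 = 1 ∨ M 2 2 = -1 := by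
      have hfact : (M 2 2 - 1) * (M 2 2 + 1) = 0 := by linear_combination hr2
      rcases mul_eq_zero.mp hfact with h | h
      · exact Or.inl (by linear_combination h)
      · exact Or.inr (by linear_combination h)
    -- the a^2 ≠ d^2 condition, common to both cases
    have hsq : M 0 0 ^ 2 ≠ M 1 0 ^ 2 := by
      intro hc
      have hfact : (M 0 0 - M 1 0) * (M 0 0 + M 1 0) = 0 := by linear_combination hc
      rcases hcases with hr | hr
      · -- r = 1 : b = d, e = a
        have hb' : M 0 1 = M 1 0 := by rw [h10, hr, mul_one]
        have he' : M 1 1 = M 0 0 := by rw [h11, hr, mul_one]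
        rcases mul_eq_zero.mp hfact with h | h
        · -- a = d
          have hx : M.mulVec ![1,-1,0] = 0 := by
            funext i
            fin_cases i <;>
              simp [Matrix.mulVec, dotProduct, Fin.sum_univ_three, hb', he', h22, h12] <;>
              first
              | linear_combination h
              | linear_combination -h
          have := congrFun (hker _ hx) 0
          simp at this
        · -- a = -d
          have hx : M.mulVec ![1,1,0] = 0 := by
            funext i
            fin_cases i <;>
              simp [Matrix.mulVec, dotProduct, Fin.sum_univ_three, hb', he', h22, h12] <;>
              first
              | linear_combination h
              | linear_combination -h
          have := congrFun (hker _ hx) 0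
          simp at this
      · -- r = -1 : b = -d, e = -a
        have hb' : M 0 1 = -M 1 0 := by
          have := h21
          rw [hr] at this
          linear_combination this
        have he' : M 1 1 = -M 0 0 := by rw [h11, hr]; ring
        rcases mul_eq_zero.mp hfact with h | h
        · -- a = d
          have hx : M.mulVec ![1,1,0] = 0 := by
            funext i
            fin_cases i <;>
              simp [Matrix.mulVec, dotProduct, Fin.sum_univ_three, hb', he', h22, h12] <;>
              first
              | linear_combination h
              | linear_combination -h
          have := congrFun (hker _ hx) 0
          simp at this
        · -- a = -d
          have hx : M.mulVec ![1,-1,0] = 0 := by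
            funext i
            fin_cases i <;>
              simp [Matrix.mulVec, dotProduct, Fin.sum_univ_three, hb', he', h22, h12] <;>
              first
              | linear_combination h
              | linear_combination -h
          have := congrFun (hker _ hx) 0
          simp at this
    refine ⟨M 0 0, M 1 0, hsq, ?_⟩
    rcases hcases with hr | hr
    · left
      ext i j
      fin_cases i <;> fin_cases j <;>
        simp [h10, h11, h12, h22, hc0, hf0, hr]
    · right
      ext i j
      fin_cases i <;> fin_cases j <;>
        simp [h10, h11, h12, h22, hc0, hf0, hr]

  · rintro ⟨α₁, α₄, hne, h | h⟩
    · constructor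
      · rw [bij_iff_isUnit, h, Matrix.isUnit_iff_isUnit_det, Matrix.det_fin_three]
        apply isUnit_iff_ne_zero.mpr
        intro hc; apply hne
        simp at hc
        linear_combination hc
      · intro x y
        rw [hg, hg, hg, h]
        funext i
        fin_cases i <;>
          · simp [mulL6, Matrix.mulVec, dotProduct, Fin.sum_univ_three]
            try ring
    · constructor
      · rw [bij_iff_isUnit, h, Matrix.isUnit_iff_isUnit_det, Matrix.det_fin_three]
        apply isUnit_iff_ne_zero.mpr
        intro hc; apply hne
        simp at hc
        linear_combination hc
      · intro x y
        rw [hg, hg, hg, h]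
        funext i
        fin_cases i <;>
          · simp [mulL6, Matrix.mulVec, dotProduct, Fin.sum_univ_three]
            try ring
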